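/- The set of minimal monomial generators of E_q^{(2)} equals {f_X : ∅ ≠ X ⊆ [q]}, where f_X = (∏_{X⊆A} y_A^2)(∏_{X∩A ≠ ∅, X∩([q]\A) ≠ ∅} y_A). Consequently sdefect(2, E_q) = μ(E_q^{(2)}/E_q^2) = 2^q − 1 − q − C(q,2), since f_X ∈ E_q^2 if and only if |X| ≤ 2. -/

import Mathlib

open MvPolynomial

/-- Index type: nonempty subsets of `[q]`. -/
abbrev EIdx (q : ℕ) := {A : Finset (Fin q) // A.Nonempty}

/-- The generator `ε_i = ∏_{A ∋ i} y_A` of the extremal ideal. -/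
noncomputable def extGen (k : Type*) [Field k] (q : ℕ) (i : Fin q) :
    MvPolynomial (EIdx q) k :=
  ∏ A : EIdx q, if i ∈ A.1 then X A else 1

/-- The `q`-extremal ideal `E_q = (ε_1, …, ε_q)`. -/
noncomputable def extIdeal (k : Type*) [Field k] (q : ℕ) :
    Ideal (MvPolynomial (EIdx q) k) :=
  Ideal.span (Set.range (extGen k q))

/-- The `r`-th symbolic power of a square-free monomial ideal: the intersection
of the `r`-th powers of its minimal primes. -/
def symbPow {R : Type*} [CommRing R] (I : Ideal R) (r : ℕ) : Ideal R :=
  ⨅ P ∈ I.minimalPrimes, P ^ r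

/-- The monomial `y^b = ∏_A y_A^{b_A}`. -/
noncomputable def ymon (k : Type*) [Field k] (q : ℕ) (b : EIdx q → ℕ) :
    MvPolynomial (EIdx q) k :=
  ∏ A : EIdx q, X A ^ b A

/-- `f_X = (∏_{X ⊆ A} y_A²) (∏_{X∩A ≠ ∅, X∩Aᶜ ≠ ∅} y_A)`. -/
noncomputable def fMon (k : Type*) [Field k] (q : ℕ) (Xs : Finset (Fin q)) :
    MvPolynomial (EIdx q) k :=
  (∏ A : EIdx q, if Xs ⊆ A.1 then X A ^ 2 else 1) *
    (∏ A : EIdx q,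
      if (Xs ∩ A.1).Nonempty ∧ (Xs ∩ A.1ᶜ).Nonempty then X A else 1)

/-!
The minimal primes of `E_q` are generated by the variables `y_A`, `A ∈ C`, for the minimal
set covers `C` of `[q]`, so `y^b ∈ E_q^{(2)}` iff `∑_{A ∈ C} b_A ≥ 2` for every set cover `C`.
Such a `b` dominates the exponent of `f_X` for `X = {i : b_A > 0 whenever i ∈ A}` (the sets with
`b_A = 0` cover the complement of `X`), and the exponents of the `f_X` are pairwise
incomparable, so they are exactly the minimal ones. Finally `ε_i ε_j ∣ f_X` iff `X ⊆ {i, j}`.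
-/
namespace MvPolynomial

theorem isPrime_span_X_image {σ R : Type*} [CommRing R] [IsDomain R] (s : Set σ) :
    (Ideal.span (X '' s : Set (MvPolynomial σ R))).IsPrime := by
  classical
  set I := Ideal.span (X '' s : Set (MvPolynomial σ R))
  let φ : MvPolynomial σ R →ₐ[R] MvPolynomial σ R := aeval fun i => if i ∈ s then 0 else X i
  have sub_mem : ∀ f, f - φ f ∈ I := by
    intro f
    induction f using MvPolynomial.induction_on with
    | C a => simp
    | add p r hp hr => simpa only [map_add, add_sub_add_comm] using add_mem hp hr
    | mul_X p i hp =>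
      rw [map_mul, show p * X i - φ p * φ (X i) = (p - φ p) * X i + φ p * (X i - φ (X i)) by ring]
      refine add_mem (I.mul_mem_right _ hp) (I.mul_mem_left _ ?_)
      by_cases hi : i ∈ s
      · simpa [φ, hi] using Ideal.subset_span (Set.mem_image_of_mem X hi)
      · simp [φ, hi]
  suffices I = RingHom.ker φ from this ▸ RingHom.ker_isPrime _
  refine le_antisymm (Ideal.span_le.2 ?_) fun f hf => ?_
  · rintro _ ⟨i, hi, rfl⟩
    simp [φ, hi]
  · simpa [RingHom.mem_ker.1 hf] using sub_mem f

end MvPolynomial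

lemma Pi.single_le_iff {ι α : Type*} [DecidableEq ι] [AddMonoid α] [PartialOrder α]
    [CanonicallyOrderedAdd α] {i : ι} {a : α} {f : ι → α} : Pi.single i a ≤ f ↔ a ≤ f i := by
  refine ⟨fun h => by simpa using h i, fun h j => ?_⟩
  by_cases hj : j = i
  · subst hj; simpa using h
  · simp [hj]

lemma Finset.two_le_sum_iff_exists_single_add_single_le {σ : Type*} [DecidableEq σ]
    {C : Finset σ} {b : σ → ℕ} :
    2 ≤ ∑ A ∈ C, b A ↔ ∃ A ∈ C, ∃ B ∈ C, Pi.single A 1 + Pi.single B 1 ≤ b := by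
  constructor
  · intro h
    obtain ⟨A, hA, hbA⟩ := Finset.exists_ne_zero_of_sum_ne_zero (by omega : ∑ A ∈ C, b A ≠ 0)
    have hAb : Pi.single A 1 ≤ b := Pi.single_le_iff.2 (Nat.one_le_iff_ne_zero.2 hbA)
    have hsum : ∑ D ∈ C, b D = 1 + ∑ D ∈ C, (b - Pi.single A 1 : σ → ℕ) D := by
      conv_lhs => rw [← add_tsub_cancel_of_le hAb]
      simp [Finset.sum_add_distrib, Finset.sum_pi_single', hA]
    obtain ⟨B, hB, hbB⟩ := Finset.exists_ne_zero_of_sum_ne_zero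
      (by omega : ∑ D ∈ C, (b - Pi.single A 1 : σ → ℕ) D ≠ 0)
    refine ⟨A, hA, B, hB, ?_⟩
    calc Pi.single A 1 + Pi.single B 1 ≤ Pi.single A 1 + (b - Pi.single A 1) :=
          add_le_add_right (Pi.single_le_iff.2 (Nat.one_le_iff_ne_zero.2 hbB)) _
      _ = b := add_tsub_cancel_of_le hAb
  · rintro ⟨A, hA, B, hB, h⟩
    calc 2 = ∑ D ∈ C, (Pi.single A 1 + Pi.single B 1 : σ → ℕ) D := by
          simp [Finset.sum_add_distrib, Finset.sum_pi_single', hA, hB]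
      _ ≤ ∑ D ∈ C, b D := Finset.sum_le_sum fun D _ => h D

lemma Finset.card_filter_card_le_powerset {α : Type*} (s : Finset α) (m : ℕ) :
    (s.powerset.filter fun t => t.card ≤ m).card = ∑ n ∈ Finset.range (m + 1), s.card.choose n := by
  classical
  have h : s.powerset.filter (fun t => t.card ≤ m) =
      (Finset.range (m + 1)).biUnion fun n => s.powersetCard n := by
    ext t
    simp [Finset.mem_powersetCard, and_comm]
  rw [h, Finset.card_biUnion fun n _ n' _ hnn' => Finset.pairwise_disjoint_powersetCard s hnn']
  simp [Finset.card_powersetCard]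

namespace ExtremalIdeal

open scoped Pointwise

variable {k : Type*} [Field k] {q : ℕ}

lemma ymon_eq_monomial (b : EIdx q → ℕ) :
    ymon k q b = monomial (Finsupp.equivFunOnFinite.symm b) 1 := by
  rw [monomial_eq, C_1, one_mul, Finsupp.prod_fintype _ _ fun _ => pow_zero _]
  rfl

lemma ymon_injective : Function.Injective (ymon k q) := by
  intro b c h
  simp only [ymon_eq_monomial] at h
  exact Finsupp.equivFunOnFinite.symm.injective (monomial_left_injective one_ne_zero h)

lemma ymon_add (b c : EIdx q → ℕ) : ymon k q (b + c) = ymon k q b * ymon k q c := by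
  simp only [ymon, Pi.add_apply, pow_add, Finset.prod_mul_distrib]

lemma ymon_mem_span_ymon_iff (S : Set (EIdx q → ℕ)) (b : EIdx q → ℕ) :
    ymon k q b ∈ Ideal.span (ymon k q '' S) ↔ ∃ c ∈ S, c ≤ b := by
  classical
  have hS : ymon k q '' S =
      (fun d => monomial d (1 : k)) '' (Finsupp.equivFunOnFinite.symm '' S) := by
    rw [Set.image_image]
    simp only [ymon_eq_monomial]
  rw [hS, mem_ideal_span_monomial_image, ymon_eq_monomial, support_monomial,
    if_neg one_ne_zero]
  simp only [Finset.mem_singleton, forall_eq, Set.exists_mem_image]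
  simp [Finsupp.le_def, Pi.le_def]

lemma span_ymon_mul_span_ymon (S T : Set (EIdx q → ℕ)) :
    Ideal.span (ymon k q '' S) * Ideal.span (ymon k q '' T) =
      Ideal.span (ymon k q '' (S + T)) := by
  rw [Ideal.span_mul_span']
  congr 1
  ext f
  simp only [Set.mem_mul, Set.mem_add, Set.mem_image]
  constructor
  · rintro ⟨_, ⟨b, hb, rfl⟩, _, ⟨c, hc, rfl⟩, rfl⟩
    exact ⟨b + c, ⟨b, hb, c, hc, rfl⟩, ymon_add b c⟩
  · rintro ⟨_, ⟨b, hb, c, hc, rfl⟩, rfl⟩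
    exact ⟨_, ⟨b, hb, rfl⟩, _, ⟨c, hc, rfl⟩, (ymon_add b c).symm⟩

lemma X_eq_ymon (A : EIdx q) :
    (X A : MvPolynomial (EIdx q) k) = ymon k q (Pi.single A 1) := by
  rw [ymon, Finset.prod_eq_single A (fun B _ hB => by simp [hB]) (by simp)]
  simp

def IsCover (C : Finset (EIdx q)) : Prop := ∀ i : Fin q, ∃ A ∈ C, i ∈ A.1

variable (k) in
noncomputable def coverIdeal (C : Finset (EIdx q)) : Ideal (MvPolynomial (EIdx q) k) :=
  Ideal.span (X '' (C : Set (EIdx q)))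

instance (C : Finset (EIdx q)) : (coverIdeal k C).IsPrime := isPrime_span_X_image _

lemma ymon_mem_coverIdeal_sq_iff (C : Finset (EIdx q)) (b : EIdx q → ℕ) :
    ymon k q b ∈ coverIdeal k C ^ 2 ↔ 2 ≤ ∑ A ∈ C, b A := by
  have hC : coverIdeal k C = Ideal.span (ymon k q '' ((fun A => Pi.single A 1) '' C)) := by
    rw [coverIdeal, Set.image_image]
    simp only [X_eq_ymon]
  rw [hC, pow_two, span_ymon_mul_span_ymon, ymon_mem_span_ymon_iff]
  simp only [Set.mem_add, Set.mem_image, Finset.mem_coe]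
  rw [Finset.two_le_sum_iff_exists_single_add_single_le]
  constructor
  · rintro ⟨_, ⟨_, ⟨A, hA, rfl⟩, _, ⟨B, hB, rfl⟩, rfl⟩, hle⟩
    exact ⟨A, hA, B, hB, hle⟩
  · rintro ⟨A, hA, B, hB, hle⟩
    exact ⟨_, ⟨_, ⟨A, hA, rfl⟩, _, ⟨B, hB, rfl⟩, rfl⟩, hle⟩

lemma extIdeal_le_coverIdeal {C : Finset (EIdx q)} (hC : IsCover C) :
    extIdeal k q ≤ coverIdeal k C := by
  rw [extIdeal, Ideal.span_le]
  rintro _ ⟨i, rfl⟩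
  obtain ⟨A, hAC, hiA⟩ := hC i
  have hdvd : (X A : MvPolynomial (EIdx q) k) ∣ extGen k q i := by
    simpa [hiA, extGen] using Finset.dvd_prod_of_mem
      (fun B : EIdx q => if i ∈ B.1 then (X B : MvPolynomial (EIdx q) k) else 1)
      (Finset.mem_univ A)
  exact Ideal.mem_of_dvd _ hdvd (Ideal.subset_span (Set.mem_image_of_mem X hAC))

lemma exists_isCover_coverIdeal_le {P : Ideal (MvPolynomial (EIdx q) k)} [hP : P.IsPrime]
    (hle : extIdeal k q ≤ P) : ∃ C : Finset (EIdx q), IsCover C ∧ coverIdeal k C ≤ P := by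
  have hX : ∀ i : Fin q, ∃ A : EIdx q, i ∈ A.1 ∧ X A ∈ P := by
    intro i
    obtain ⟨A, -, hA⟩ := hP.prod_mem_iff.1 (hle (Ideal.subset_span ⟨i, rfl⟩))
    by_cases hiA : i ∈ A.1
    · exact ⟨A, hiA, by simpa [hiA] using hA⟩
    · simp [hiA, ← Ideal.eq_top_iff_one, hP.ne_top] at hA
  choose g hgi hgP using hX
  refine ⟨Finset.univ.image g, fun i => ⟨g i, by simp, hgi i⟩, ?_⟩
  rw [coverIdeal, Ideal.span_le]
  rintro _ ⟨A, hA, rfl⟩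
  obtain ⟨i, -, rfl⟩ := Finset.mem_image.1 hA
  exact hgP i

def CoverHeavy (b : EIdx q → ℕ) : Prop := ∀ C : Finset (EIdx q), IsCover C → 2 ≤ ∑ A ∈ C, b A

lemma ymon_mem_symbPow_two_iff (b : EIdx q → ℕ) :
    ymon k q b ∈ symbPow (extIdeal k q) 2 ↔ CoverHeavy b := by
  simp only [symbPow, Submodule.mem_iInf]
  refine ⟨fun h C hC => ?_, fun h P hP => ?_⟩
  · obtain ⟨P, hP, hPC⟩ := Ideal.exists_minimalPrimes_le (extIdeal_le_coverIdeal (k := k) hC)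
    exact (ymon_mem_coverIdeal_sq_iff C b).1 (Ideal.pow_right_mono hPC 2 (h P hP))
  · have : P.IsPrime := hP.1.1
    obtain ⟨C, hC, hCP⟩ := exists_isCover_coverIdeal_le hP.1.2
    exact Ideal.pow_right_mono hCP 2 ((ymon_mem_coverIdeal_sq_iff C b).2 (h C hC))

def epsExp (i : Fin q) (A : EIdx q) : ℕ := if i ∈ A.1 then 1 else 0

def fExp (Xs : Finset (Fin q)) (A : EIdx q) : ℕ :=
  if Xs ⊆ A.1 then 2 else if (Xs ∩ A.1).Nonempty then 1 else 0

lemma extGen_eq_ymon (i : Fin q) : extGen k q i = ymon k q (epsExp i) := by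
  simp only [extGen, ymon, epsExp]
  congr! 2 with A
  split_ifs <;> simp

lemma fMon_eq_ymon (Xs : Finset (Fin q)) : fMon k q Xs = ymon k q (fExp Xs) := by
  rw [fMon, ymon, ← Finset.prod_mul_distrib]
  refine Finset.prod_congr rfl fun A _ => ?_
  have hcompl : (Xs ∩ A.1ᶜ).Nonempty ↔ ¬ Xs ⊆ A.1 := by
    simp [Finset.Nonempty, Finset.not_subset]
  by_cases hsub : Xs ⊆ A.1 <;> by_cases hmeet : (Xs ∩ A.1).Nonempty <;> simp [fExp, *]

lemma two_le_fExp_iff {Xs : Finset (Fin q)} {A : EIdx q} : 2 ≤ fExp Xs A ↔ Xs ⊆ A.1 := by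
  unfold fExp
  split_ifs <;> simp_all

lemma fExp_pos_iff {Xs : Finset (Fin q)} (hXs : Xs.Nonempty) {A : EIdx q} :
    0 < fExp Xs A ↔ (Xs ∩ A.1).Nonempty := by
  unfold fExp
  split_ifs with hsub hmeet
  · simpa [Finset.inter_eq_left.2 hsub] using hXs
  · simpa using hmeet
  · simpa using hmeet

lemma CoverHeavy.mono {b c : EIdx q → ℕ} (hb : CoverHeavy b) (hbc : b ≤ c) : CoverHeavy c :=
  fun C hC => (hb C hC).trans (Finset.sum_le_sum fun A _ => hbc A)

lemma coverHeavy_fExp {Xs : Finset (Fin q)} (hXs : Xs.Nonempty) : CoverHeavy (fExp Xs) := by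
  intro C hC
  obtain ⟨x, hx⟩ := hXs
  obtain ⟨A, hAC, hxA⟩ := hC x
  by_cases hsub : Xs ⊆ A.1
  · exact (two_le_fExp_iff.2 hsub).trans (Finset.single_le_sum (fun _ _ => Nat.zero_le _) hAC)
  obtain ⟨y, hy, hyA⟩ := Finset.not_subset.1 hsub
  obtain ⟨B, hBC, hyB⟩ := hC y
  have hA : 0 < fExp Xs A := (fExp_pos_iff ⟨x, hx⟩).2 ⟨x, Finset.mem_inter.2 ⟨hx, hxA⟩⟩
  have hB : 0 < fExp Xs B := (fExp_pos_iff ⟨x, hx⟩).2 ⟨y, Finset.mem_inter.2 ⟨hy, hyB⟩⟩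
  have hAB : A ≠ B := by rintro rfl; exact hyA hyB
  calc 2 ≤ ∑ D ∈ {A, B}, fExp Xs D := by rw [Finset.sum_pair hAB]; omega
    _ ≤ ∑ D ∈ C, fExp Xs D :=
      Finset.sum_le_sum_of_subset (Finset.insert_subset hAC (Finset.singleton_subset_iff.2 hBC))

lemma exists_fExp_le_of_coverHeavy {b : EIdx q → ℕ} (hb : CoverHeavy b) :
    ∃ Xs : Finset (Fin q), Xs.Nonempty ∧ fExp Xs ≤ b := by
  set Z := Finset.univ.filter fun A : EIdx q => b A = 0
  set Xs := Finset.univ.filter fun i : Fin q => ∀ A : EIdx q, i ∈ A.1 → b A ≠ 0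
  have hZ : ∀ i ∉ Xs, ∃ A ∈ Z, i ∈ A.1 := by
    intro i hi
    simpa [Xs, Z, and_comm] using hi
  have hZsum : ∑ A ∈ Z, b A = 0 := Finset.sum_eq_zero fun A hA => (Finset.mem_filter.1 hA).2
  have hXs : Xs.Nonempty := by
    by_contra hempty
    rw [Finset.not_nonempty_iff_eq_empty] at hempty
    have := hb Z fun i => hZ i (by simp [hempty])
    omega
  have hpos : ∀ x ∈ Xs, ∀ A : EIdx q, x ∈ A.1 → b A ≠ 0 := fun x hx =>
    (Finset.mem_filter.1 hx).2
  refine ⟨Xs, hXs, fun A => ?_⟩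
  by_cases hsub : Xs ⊆ A.1
  · obtain ⟨x, hx⟩ := hXs
    have hAZ : A ∉ Z := by simpa [Z] using hpos x hx A (hsub hx)
    have hcover : IsCover (insert A Z) := fun i => by
      by_cases hi : i ∈ Xs
      · exact ⟨A, Finset.mem_insert_self _ _, hsub hi⟩
      · obtain ⟨B, hBZ, hiB⟩ := hZ i hi
        exact ⟨B, Finset.mem_insert_of_mem hBZ, hiB⟩
    have := hb _ hcover
    rw [Finset.sum_insert hAZ, hZsum] at this
    simp only [fExp, if_pos hsub]
    omega
  by_cases hmeet : (Xs ∩ A.1).Nonempty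
  · obtain ⟨x, hx⟩ := hmeet
    rw [fExp, if_neg hsub, if_pos ⟨x, hx⟩]
    exact Nat.one_le_iff_ne_zero.2 (hpos x (Finset.mem_inter.1 hx).1 A (Finset.mem_inter.1 hx).2)
  · simp [fExp, hsub, hmeet]

lemma eq_of_fExp_le_fExp {Xs Ys : Finset (Fin q)} (hXs : Xs.Nonempty) (hYs : Ys.Nonempty)
    (h : fExp Xs ≤ fExp Ys) : Xs = Ys := by
  refine Finset.Subset.antisymm (fun x hx => ?_) ?_
  · have hx' : 0 < fExp Ys ⟨{x}, Finset.singleton_nonempty x⟩ :=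
      ((fExp_pos_iff hXs).2 ⟨x, by simp [hx]⟩).trans_le (h _)
    obtain ⟨y, hy⟩ := (fExp_pos_iff hYs).1 hx'
    obtain ⟨hyY, rfl⟩ : y ∈ Ys ∧ y = x := by simpa using hy
    exact hyY
  · exact two_le_fExp_iff.1 ((two_le_fExp_iff (A := ⟨Xs, hXs⟩)).2 subset_rfl |>.trans (h _))

lemma coverHeavy_minimal_iff (b : EIdx q → ℕ) :
    (CoverHeavy b ∧ ∀ A : EIdx q, 0 < b A →
        ¬ CoverHeavy (fun B => if B = A then b B - 1 else b B)) ↔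
      ∃ Xs : Finset (Fin q), Xs.Nonempty ∧ b = fExp Xs := by
  constructor
  · rintro ⟨hb, hmin⟩
    obtain ⟨Xs, hXs, hle⟩ := exists_fExp_le_of_coverHeavy hb
    refine ⟨Xs, hXs, funext fun A => ?_⟩
    by_contra hne
    have hlt : fExp Xs A < b A := lt_of_le_of_ne (hle A) (Ne.symm hne)
    refine hmin A (by omega) ((coverHeavy_fExp hXs).mono fun B => ?_)
    dsimp only
    split_ifs with hBA
    · subst hBA; omega
    · exact hle B
  · rintro ⟨Xs, hXs, rfl⟩
    refine ⟨coverHeavy_fExp hXs, fun A hA hdec => ?_⟩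
    obtain ⟨Ys, hYs, hle⟩ := exists_fExp_le_of_coverHeavy hdec
    have hdec_le : (fun B => if B = A then fExp Xs B - 1 else fExp Xs B) ≤ fExp Xs :=
      fun B => by dsimp only; split_ifs <;> omega
    obtain rfl := eq_of_fExp_le_fExp hYs hXs (hle.trans hdec_le)
    have hA' := hle A
    dsimp only at hA'
    rw [if_pos rfl] at hA'
    omega

lemma ymon_mem_extIdeal_sq_iff (b : EIdx q → ℕ) :
    ymon k q b ∈ extIdeal k q ^ 2 ↔ ∃ i j : Fin q, epsExp i + epsExp j ≤ b := by
  have hE : extIdeal k q = Ideal.span (ymon k q '' Set.range epsExp) := by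
    rw [extIdeal, show extGen k q = ymon k q ∘ epsExp from funext extGen_eq_ymon,
      Set.range_comp]
  rw [hE, pow_two, span_ymon_mul_span_ymon, ymon_mem_span_ymon_iff]
  simp only [Set.mem_add, Set.mem_range]
  constructor
  · rintro ⟨_, ⟨_, ⟨i, rfl⟩, _, ⟨j, rfl⟩, rfl⟩, hle⟩
    exact ⟨i, j, hle⟩
  · rintro ⟨i, j, hle⟩
    exact ⟨_, ⟨_, ⟨i, rfl⟩, _, ⟨j, rfl⟩, rfl⟩, hle⟩

lemma epsExp_add_epsExp_le_fExp (i j : Fin q) : epsExp i + epsExp j ≤ fExp {i, j} := by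
  intro A
  have h2 := two_le_fExp_iff (Xs := {i, j}) (A := A)
  have h1 := fExp_pos_iff (Finset.insert_nonempty i {j}) (A := A)
  by_cases hi : i ∈ A.1 <;> by_cases hj : j ∈ A.1 <;>
    simp_all [epsExp, Finset.insert_subset_iff, Finset.Nonempty] <;> omega

lemma exists_epsExp_add_le_fExp_iff {Xs : Finset (Fin q)} (hXs : Xs.Nonempty) :
    (∃ i j : Fin q, epsExp i + epsExp j ≤ fExp Xs) ↔ Xs.card ≤ 2 := by
  constructor
  · rintro ⟨i, j, h⟩
    have hij := h ⟨{i, j}, Finset.insert_nonempty i {j}⟩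
    have hsub : Xs ⊆ {i, j} := two_le_fExp_iff.1 (le_trans (by simp [epsExp]) hij)
    exact (Finset.card_le_card hsub).trans Finset.card_le_two
  · intro hcard
    obtain ⟨i, j, rfl⟩ : ∃ i j, Xs = {i, j} := by
      obtain h1 | h2 : Xs.card = 1 ∨ Xs.card = 2 := by have := hXs.card_pos; omega
      · obtain ⟨i, rfl⟩ := Finset.card_eq_one.1 h1
        exact ⟨i, i, (Finset.pair_eq_singleton i).symm⟩
      · obtain ⟨i, j, -, rfl⟩ := Finset.card_eq_two.1 h2
        exact ⟨i, j, rfl⟩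
    exact ⟨i, j, epsExp_add_epsExp_le_fExp i j⟩

lemma card_filter_two_lt_card (q : ℕ) :
    (Finset.univ.filter fun Xs : Finset (Fin q) => Xs.Nonempty ∧ 2 < Xs.card).card =
      2 ^ q - 1 - q - q.choose 2 := by
  have hfilter : (Finset.univ.filter fun Xs : Finset (Fin q) => Xs.Nonempty ∧ 2 < Xs.card) =
      Finset.univ.filter fun Xs => ¬ Xs.card ≤ 2 := by
    ext Xs
    simp only [Finset.mem_filter, Finset.mem_univ, true_and, not_le, and_iff_right_iff_imp]
    exact fun h => Finset.card_pos.1 (by omega)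
  have hsmall := Finset.card_filter_card_le_powerset (Finset.univ : Finset (Fin q)) 2
  have htotal := Finset.card_filter_add_card_filter_not
    (s := (Finset.univ : Finset (Finset (Fin q)))) (p := fun Xs => Xs.card ≤ 2)
  simp only [Finset.powerset_univ, Finset.card_univ, Fintype.card_fin, Fintype.card_finset,
    Finset.sum_range_succ, Finset.sum_range_zero, Nat.choose_zero_right,
    Nat.choose_one_right] at hsmall htotal
  rw [hfilter]
  omega

end ExtremalIdeal

theorem stmt18_general (k : Type*) [Field k] (q : ℕ) :
    -- the minimal monomial generators of `E_q^{(2)}` are exactly the `f_X`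
    (∀ b : EIdx q → ℕ,
      (ymon k q b ∈ symbPow (extIdeal k q) 2 ∧
        ∀ A : EIdx q, 0 < b A →
          ymon k q (fun B => if B = A then b B - 1 else b B) ∉
            symbPow (extIdeal k q) 2) ↔
      ∃ Xs : Finset (Fin q), Xs.Nonempty ∧ ymon k q b = fMon k q Xs) ∧
    -- `f_X ∈ E_q²` iff `|X| ≤ 2`
    (∀ Xs : Finset (Fin q), Xs.Nonempty →
      (fMon k q Xs ∈ (extIdeal k q) ^ 2 ↔ Xs.card ≤ 2)) ∧
    -- hence `sdefect(2, E_q) = 2^q − 1 − q − C(q,2)`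
    (Finset.univ.filter fun Xs : Finset (Fin q) =>
        Xs.Nonempty ∧ 2 < Xs.card).card =
      2 ^ q - 1 - q - q.choose 2 := by
  open ExtremalIdeal in
  refine ⟨fun b => ?_, fun Xs hXs => ?_, card_filter_two_lt_card q⟩
  · simp only [ymon_mem_symbPow_two_iff, fMon_eq_ymon, ymon_injective.eq_iff]
    exact coverHeavy_minimal_iff b
  · rw [fMon_eq_ymon, ymon_mem_extIdeal_sq_iff, exists_epsExp_add_le_fExp_iff hXs]

theorem stmt18 (k : Type*) [Field k] (q : ℕ) (hq : 1 ≤ q) :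
    -- the minimal monomial generators of `E_q^{(2)}` are exactly the `f_X`
    (∀ b : EIdx q → ℕ,
      (ymon k q b ∈ symbPow (extIdeal k q) 2 ∧
        ∀ A : EIdx q, 0 < b A →
          ymon k q (fun B => if B = A then b B - 1 else b B) ∉
            symbPow (extIdeal k q) 2) ↔
      ∃ Xs : Finset (Fin q), Xs.Nonempty ∧ ymon k q b = fMon k q Xs) ∧
    -- `f_X ∈ E_q²` iff `|X| ≤ 2`
    (∀ Xs : Finset (Fin q), Xs.Nonempty →
      (fMon k q Xs ∈ (extIdeal k q) ^ 2 ↔ Xs.card ≤ 2)) ∧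
    -- hence `sdefect(2, E_q) = 2^q − 1 − q − C(q,2)`
    (Finset.univ.filter fun Xs : Finset (Fin q) =>
        Xs.Nonempty ∧ 2 < Xs.card).card =
      2 ^ q - 1 - q - q.choose 2 :=
  stmt18_general k q
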